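/- arXiv:1611.06304 — 2 statements merged into one kernel-verified Lean document; each statement's English description precedes it below -/
import Mathlib

section
/- Suppose Y = m(D,X) + ν(X,ε) with D ∈ {0,1}, Z ∈ {0,1}, Z conditionally independent of ε given X, and let δ(x) = m(1,x) - m(0,x) and W = Y + (1-D)·δ(X). Then W is conditionally independent of Z given X. -/
/-!
Under separability `W = m(1, X) + ν(X, ε)` is a measurable function of `(X, ε)`, so it suffices
that `Z ⊥⊥ (X, ε) | X`. This follows from `Z ⊥⊥ ε | X` because adjoining the conditioning
σ-algebra to one side preserves conditional independence: a set `a` measurable in the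
conditioning σ-algebra has conditional probability `1_a`, so it factors out of every conditional
probability `P(t ∩ a | X)`.
-/

open MeasureTheory ProbabilityTheory Set MeasurableSpace

lemma IsPiSystem.image2_inter {α : Type*} {C D : Set (Set α)} (hC : IsPiSystem C)
    (hD : IsPiSystem D) : IsPiSystem (image2 (· ∩ ·) C D) := by
  rintro _ ⟨s₁, hs₁, t₁, ht₁, rfl⟩ _ ⟨s₂, hs₂, t₂, ht₂, rfl⟩ hst
  rw [inter_inter_inter_comm] at hst ⊢
  exact mem_image2_of_mem (hC _ hs₁ _ hs₂ hst.left) (hD _ ht₁ _ ht₂ hst.right)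

lemma MeasurableSpace.sup_eq_generateFrom_image2_inter {α : Type*} (m₁ m₂ : MeasurableSpace α) :
    m₁ ⊔ m₂ = generateFrom (image2 (· ∩ ·) {s | MeasurableSet[m₁] s} {t | MeasurableSet[m₂] t}) := by
  refine le_antisymm (sup_le (fun s hs ↦ ?_) (fun t ht ↦ ?_)) (generateFrom_le ?_)
  · exact measurableSet_generateFrom ⟨s, hs, univ, MeasurableSet.univ, inter_univ s⟩
  · exact measurableSet_generateFrom ⟨univ, MeasurableSet.univ, t, ht, univ_inter t⟩
  · rintro _ ⟨s, hs, t, ht, rfl⟩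
    exact (le_sup_left (b := m₂) s hs).inter (le_sup_right (a := m₁) t ht)

section CondExpKernel

variable {Ω : Type*} {m mΩ : MeasurableSpace Ω} [StandardBorelSpace Ω]
  {μ : Measure Ω} [IsFiniteMeasure μ]

lemma condExpKernel_real_ae_eq_indicator (hm : m ≤ mΩ) {a : Set Ω} (ha : MeasurableSet[m] a) :
    (fun ω ↦ (condExpKernel μ m ω).real a) =ᵐ[μ.trim hm] a.indicator 1 := by
  have hcondExp : μ⟦a | m⟧ = a.indicator 1 :=
    condExp_of_stronglyMeasurable hm (stronglyMeasurable_one.indicator ha)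
      ((integrable_const (1 : ℝ)).indicator (hm a ha))
  rw [← hcondExp]
  exact condExpKernel_ae_eq_trim_condExp hm (hm a ha)

lemma condExpKernel_apply_inter_ae_eq_mul (hm : m ≤ mΩ) {a : Set Ω} (ha : MeasurableSet[m] a)
    (t : Set Ω) :
    ∀ᵐ ω ∂(μ.trim hm),
      condExpKernel μ m ω (t ∩ a) = condExpKernel μ m ω t * condExpKernel μ m ω a := by
  filter_upwards [condExpKernel_real_ae_eq_indicator hm ha] with ω hω
  by_cases hωa : ω ∈ a
  · have ha_one : condExpKernel μ m ω a = 1 := by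
      simpa [hωa, measureReal_def, ENNReal.toReal_eq_one_iff] using hω
    have hac_null : condExpKernel μ m ω aᶜ = 0 := (prob_compl_eq_zero_iff (hm a ha)).mpr ha_one
    rw [measure_inter_conull hac_null, ha_one, mul_one]
  · have ha_zero : condExpKernel μ m ω a = 0 := by
      simpa [hωa, measureReal_eq_zero_iff] using hω
    rw [measure_mono_null inter_subset_right ha_zero, ha_zero, mul_zero]

end CondExpKernel

namespace ProbabilityTheory

variable {Ω : Type*} {m' m₁ m₂ mΩ : MeasurableSpace Ω} [StandardBorelSpace Ω]
  {hm' : m' ≤ mΩ} {μ : Measure Ω} [IsFiniteMeasure μ]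

theorem CondIndep.sup_right_self (h : CondIndep m' m₁ m₂ hm' μ) (h₁ : m₁ ≤ mΩ) (h₂ : m₂ ≤ mΩ) :
    CondIndep m' m₁ (m' ⊔ m₂) hm' μ := by
  refine CondIndepSets.condIndep h₁ (sup_le hm' h₂) (@isPiSystem_measurableSet Ω m₁)
    ((@isPiSystem_measurableSet Ω m').image2_inter (@isPiSystem_measurableSet Ω m₂))
    (@generateFrom_measurableSet Ω m₁).symm (sup_eq_generateFrom_image2_inter m' m₂) ?_
  rintro s _ hs ⟨a, ha, t, ht, rfl⟩
  filter_upwards [h s t hs ht, condExpKernel_apply_inter_ae_eq_mul hm' ha (s ∩ t),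
    condExpKernel_apply_inter_ae_eq_mul hm' ha t] with ω hst hsta hta
  rw [inter_comm a t, ← inter_assoc, hsta, hst, hta, mul_assoc]

theorem CondIndepFun.prodMk_right_of_measurable {β γ δ : Type*} [MeasurableSpace β]
    [MeasurableSpace γ] [MeasurableSpace δ] {f : Ω → β} {g : Ω → γ} {k : Ω → δ}
    (h : CondIndepFun m' hm' f g μ) (hf : Measurable f) (hg : Measurable g)
    (hk : Measurable[m'] k) :
    CondIndepFun m' hm' f (fun ω ↦ (k ω, g ω)) μ := by
  refine condIndep_of_condIndep_of_le_right (CondIndep.sup_right_self h hf.comap_le hg.comap_le) ?_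
  exact Measurable.comap_le <|
    (hk.mono le_sup_left le_rfl).prodMk ((comap_measurable g).mono le_sup_right le_rfl)

end ProbabilityTheory

theorem stmt3_general {Ω 𝒳 ℰ : Type*} [MeasurableSpace Ω] [StandardBorelSpace Ω]
    [MeasurableSpace 𝒳] [MeasurableSpace ℰ]
    (μ : Measure Ω) [IsProbabilityMeasure μ]
    (X : Ω → 𝒳) (Z D : Ω → Bool) (ε : Ω → ℰ)
    (hX : Measurable X) (hZ : Measurable Z) (hε : Measurable ε)
    (m : Bool → 𝒳 → ℝ) (ν : 𝒳 → ℰ → ℝ)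
    (hmν : ∀ d, Measurable (fun p : 𝒳 × ℰ => m d p.1 + ν p.1 p.2))
    (Y : Ω → ℝ) (hY : ∀ ω, Y ω = m (D ω) (X ω) + ν (X ω) (ε ω))
    (δ : 𝒳 → ℝ) (hδ : ∀ x, δ x = m true x - m false x)
    (W : Ω → ℝ) (hW : ∀ ω, W ω = Y ω + (1 - (if D ω then (1:ℝ) else 0)) * δ (X ω))
    (hexo : CondIndepFun (MeasurableSpace.comap X inferInstance) hX.comap_le Z ε μ) :
    CondIndepFun (MeasurableSpace.comap X inferInstance) hX.comap_le Z W μ := by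
  have hW_eq : W = (fun p : 𝒳 × ℰ => m true p.1 + ν p.1 p.2) ∘ (fun ω => (X ω, ε ω)) := by
    funext ω
    rw [hW, hY, hδ]
    cases D ω
    · norm_num
      ring
    · norm_num
  rw [hW_eq]
  exact (hexo.prodMk_right_of_measurable hZ hε (comap_measurable X)).comp measurable_id (hmν true)

/-- Under additive separability `Y = m(D,X) + ν(X,ε)` and instrument exogeneity
`Z ⊥⊥ ε | X`, the variable `W = Y + (1-D)·δ(X)` with `δ = m(1,·) - m(0,·)` is
conditionally independent of `Z` given `X`. -/
theorem stmt3 {Ω 𝒳 ℰ : Type*} [MeasurableSpace Ω] [StandardBorelSpace Ω] [Nonempty Ω]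
    [MeasurableSpace 𝒳] [MeasurableSpace ℰ]
    (μ : Measure Ω) [IsProbabilityMeasure μ]
    (X : Ω → 𝒳) (Z D : Ω → Bool) (ε : Ω → ℰ)
    (hX : Measurable X) (hZ : Measurable Z) (hD : Measurable D) (hε : Measurable ε)
    (m : Bool → 𝒳 → ℝ) (ν : 𝒳 → ℰ → ℝ)
    (hmν : ∀ d, Measurable (fun p : 𝒳 × ℰ => m d p.1 + ν p.1 p.2))
    (Y : Ω → ℝ) (hY : ∀ ω, Y ω = m (D ω) (X ω) + ν (X ω) (ε ω))
    (δ : 𝒳 → ℝ) (hδ : ∀ x, δ x = m true x - m false x)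
    (W : Ω → ℝ) (hW : ∀ ω, W ω = Y ω + (1 - (if D ω then (1:ℝ) else 0)) * δ (X ω))
    (hexo : CondIndepFun (MeasurableSpace.comap X inferInstance) hX.comap_le Z ε μ) :
    CondIndepFun (MeasurableSpace.comap X inferInstance) hX.comap_le Z W μ :=
  stmt3_general μ X Z D ε hX hZ hε m ν hmν Y hY δ hδ W hW hexo
end

section
/- Let ε be a real-valued random variable independent of a random variable X, with strictly increasing cumulative distribution function. Let ν : 𝒳 × ℝ → ℝ be such that ν(x,·) is strictly increasing and continuous for each x, and suppose the conditional distribution of ν(X,ε) given X = x does not depend on x (for almost every x). Then there exists a measurable function ν₁ : ℝ → ℝ such that ν(x,e) = ν₁(e) for almost every (x,e) with respect to the distribution of (X,ε). -/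
open MeasureTheory ProbabilityTheory Set

/-!
If `ν(x, ·)` and `ν(x', ·)` are strictly increasing and continuous and `ν(x, ε)`, `ν(x', ε)`
have the same law, then `ν(x, ·) = ν(x', ·)`: were `ν(x', e₀) < ν(x, e₀)`, continuity gives
`e₁ < e₀` with `ν(x', e₀) < ν(x, e₁)`, and comparing the events `{ν(x', ε) > ν(x', e₀)} = {ε > e₀}`
and `{ν(x, ε) > ν(x', e₀)} ⊇ {ε > e₁}` contradicts the strict monotonicity of the law of `ε`.
Hence `ν(x, ·) = ν(x₀, ·)` for almost every `x`, which is an almost sure statement about the first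
marginal of `(X, ε)`.
-/

section

variable {Ω : Type*} [MeasurableSpace Ω] {μ : Measure Ω} {ε : Ω → ℝ}

theorem strictAnti_measure_lt_of_strictMono_measureReal_le [IsFiniteMeasure μ]
    (hε : Measurable ε) (hcdf : StrictMono fun t => μ.real {ω | ε ω ≤ t}) :
    StrictAnti fun t => μ {ω | t < ε ω} := by
  have hsurv : ∀ t, μ.real {ω | t < ε ω} = μ.real univ - μ.real {ω | ε ω ≤ t} := fun t => by
    rw [← measureReal_compl (measurableSet_le hε measurable_const)]
    simp only [compl_ofPred, not_le]
  intro a b hab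
  rw [← ENNReal.toReal_lt_toReal (measure_ne_top μ _) (measure_ne_top μ _)]
  change μ.real _ < μ.real _
  linarith [hsurv a, hsurv b, hcdf hab]

theorem le_of_measure_lt_comp_eq (hε : StrictAnti fun t => μ {ω | t < ε ω}) {f g : ℝ → ℝ}
    (hf : StrictMono f) (hg : Monotone g) (hgc : Continuous g)
    (h : ∀ t, μ {ω | t < f (ε ω)} = μ {ω | t < g (ε ω)}) : g ≤ f := by
  intro e₀
  by_contra! hlt
  obtain ⟨e₁, he₁, hfg⟩ : ∃ e₁ < e₀, f e₀ < g e₁ := by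
    have hev : ∀ᶠ e in nhdsWithin e₀ (Iio e₀), f e₀ < g e :=
      nhdsWithin_le_nhds ((hgc.tendsto e₀).eventually (eventually_gt_nhds hlt))
    exact (hev.and self_mem_nhdsWithin).exists.imp fun e he => ⟨he.2, he.1⟩
  have hf_event : {ω | f e₀ < f (ε ω)} = {ω | e₀ < ε ω} := by
    simp only [hf.lt_iff_lt]
  have hg_event : {ω | e₁ < ε ω} ⊆ {ω | f e₀ < g (ε ω)} := fun ω hω =>
    hfg.trans_le (hg hω.le)
  have hle := calc μ {ω | e₁ < ε ω} ≤ μ {ω | f e₀ < g (ε ω)} := measure_mono hg_event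
    _ = μ {ω | e₀ < ε ω} := by rw [← h, hf_event]
  exact (hε he₁).not_ge hle

theorem eq_of_measure_lt_comp_eq (hε : StrictAnti fun t => μ {ω | t < ε ω}) {f g : ℝ → ℝ}
    (hf : StrictMono f) (hfc : Continuous f) (hg : StrictMono g) (hgc : Continuous g)
    (h : ∀ t, μ {ω | t < f (ε ω)} = μ {ω | t < g (ε ω)}) : f = g :=
  le_antisymm (le_of_measure_lt_comp_eq hε hg hf.monotone hfc fun t => (h t).symm)
    (le_of_measure_lt_comp_eq hε hf hg.monotone hgc h)

end

theorem stmt5_general {Ω 𝒳 : Type*} [MeasurableSpace Ω] [MeasurableSpace 𝒳]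
    (μ : Measure Ω) [IsProbabilityMeasure μ]
    (X : Ω → 𝒳) (ε : Ω → ℝ) (hX : Measurable X) (hε : Measurable ε)
    (hcdf : StrictMono (fun t => (μ {ω | ε ω ≤ t}).toReal))
    (ν : 𝒳 → ℝ → ℝ)
    (hmono : ∀ x, StrictMono (ν x)) (hcont : ∀ x, Continuous (ν x))
    (hsame : ∃ G : ℝ → ENNReal, ∀ᵐ x ∂(μ.map X), ∀ t, μ {ω | t < ν x (ε ω)} = G t) :
    ∃ ν₁ : ℝ → ℝ, Measurable ν₁ ∧
      ∀ᵐ p ∂(μ.map (fun ω => (X ω, ε ω))), ν p.1 p.2 = ν₁ p.2 := by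
  obtain ⟨G, hG⟩ := hsame
  have : IsProbabilityMeasure (μ.map X) := Measure.isProbabilityMeasure_map hX.aemeasurable
  obtain ⟨x₀, hx₀⟩ := hG.exists
  have hsurv := strictAnti_measure_lt_of_strictMono_measureReal_le hε hcdf
  have hν : ∀ᵐ x ∂(μ.map X), ν x = ν x₀ := hG.mono fun x hx =>
    eq_of_measure_lt_comp_eq hsurv (hmono x) (hcont x) (hmono x₀) (hcont x₀)
      fun t => (hx t).trans (hx₀ t).symm
  rw [← Measure.fst_map_prodMk hε] at hν
  have hν_pair : ∀ᵐ p ∂(μ.map (fun ω => (X ω, ε ω))), ν p.1 = ν x₀ :=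
    ae_of_ae_map measurable_fst.aemeasurable hν
  exact ⟨ν x₀, (hcont x₀).measurable, hν_pair.mono fun p hp => congrFun hp p.2⟩

/-- If `ε ⊥⊥ X`, the CDF of `ε` is strictly increasing, `ν(x,·)` is strictly
increasing and continuous, and the conditional distribution of `ν(X,ε)` given
`X = x` does not depend on `x`, then `ν(x,e)` does not depend on `x` (a.e.). -/
theorem stmt5 {Ω 𝒳 : Type*} [MeasurableSpace Ω] [MeasurableSpace 𝒳]
    (μ : Measure Ω) [IsProbabilityMeasure μ]
    (X : Ω → 𝒳) (ε : Ω → ℝ) (hX : Measurable X) (hε : Measurable ε)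
    (hindep : IndepFun X ε μ)
    (hcdf : StrictMono (fun t => (μ {ω | ε ω ≤ t}).toReal))
    (ν : 𝒳 → ℝ → ℝ)
    (hmono : ∀ x, StrictMono (ν x)) (hcont : ∀ x, Continuous (ν x))
    (hsame : ∃ G : ℝ → ENNReal, ∀ᵐ x ∂(μ.map X), ∀ t, μ {ω | t < ν x (ε ω)} = G t) :
    ∃ ν₁ : ℝ → ℝ, Measurable ν₁ ∧
      ∀ᵐ p ∂(μ.map (fun ω => (X ω, ε ω))), ν p.1 p.2 = ν₁ p.2 :=
  stmt5_general μ X ε hX hε hcdf ν hmono hcont hsame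
end
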